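/- arXiv:1810.11180 — 2 statements merged into one kernel-verified Lean document; each statement's English description precedes it below -/
import Mathlib

section
/- Let X be a mean-zero random variable in ℝⁿ with E[exp(zᵀX)] ≤ exp(zᵀΓz/2) for all z ∈ ℝⁿ, where Γ is positive semidefinite. Then for all 0 ≤ t < (2‖Γ‖_op)⁻¹, E[exp((t/2)(‖X‖² − tr(Γ)))] ≤ exp((t²/2)‖Γ‖²_HS). -/
/-!
Gaussian decoupling: for a standard Gaussian vector `Z`, `exp (‖x‖² / 2) = E exp ⟪Z, x⟫`, so by
Tonelli and the hypothesis applied at `z = √t Z`, `E exp (t ‖X‖² / 2) ≤ E exp (t ⟪Γ Z, Z⟫ / 2)`.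
In an orthonormal eigenbasis of `Γ`, `⟪Γ Z, Z⟫ = ∑ λᵢ Zᵢ²` with independent standard Gaussians
`Zᵢ`, so the right-hand side is `∏ (1 - t λᵢ)^(-1/2)`. Since `0 ≤ t λᵢ ≤ 1/2`, each factor is at
most `exp (t λᵢ / 2 + t² λᵢ² / 2)`, and `∑ λᵢ = tr Γ`, `∑ λᵢ² = ‖Γ‖²_HS`.
-/

open MeasureTheory ProbabilityTheory Real
open scoped ENNReal RealInnerProductSpace

lemma gaussianPDFReal_mul_exp_mul_sq (c x : ℝ) :
    gaussianPDFReal 0 1 x * exp (c * x ^ 2) = (√(2 * π))⁻¹ * exp (-(1 / 2 - c) * x ^ 2) := by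
  rw [gaussianPDFReal, NNReal.coe_one, mul_one, sub_zero, mul_assoc, ← exp_add]
  ring_nf

lemma integrable_exp_mul_sq_gaussianReal {c : ℝ} (hc : c < 1 / 2) :
    Integrable (fun x ↦ exp (c * x ^ 2)) (gaussianReal 0 1) := by
  rw [gaussianReal_of_var_ne_zero _ one_ne_zero,
    integrable_withDensity_iff_integrable_smul' (measurable_gaussianPDF 0 1)
      (ae_of_all _ fun _ ↦ gaussianPDF_lt_top)]
  simp_rw [toReal_gaussianPDF, smul_eq_mul, gaussianPDFReal_mul_exp_mul_sq]
  exact (integrable_exp_neg_mul_sq (by linarith)).const_mul _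

lemma integral_exp_mul_sq_gaussianReal {c : ℝ} (hc : c < 1 / 2) :
    ∫ x, exp (c * x ^ 2) ∂gaussianReal 0 1 = (√(1 - 2 * c))⁻¹ := by
  rw [integral_gaussianReal_eq_integral_smul one_ne_zero]
  simp_rw [smul_eq_mul, gaussianPDFReal_mul_exp_mul_sq, integral_const_mul, integral_gaussian]
  rw [← sqrt_inv, ← sqrt_inv, ← sqrt_mul (by positivity)]
  congr 1
  have : 1 - 2 * c ≠ 0 := by linarith
  have : 1 / 2 - c ≠ 0 := by linarith
  field_simp

lemma inv_sqrt_one_sub_le_exp {x : ℝ} (hx₀ : 0 ≤ x) (hx : x ≤ 1 / 2) :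
    (√(1 - x))⁻¹ ≤ exp (x / 2 + x ^ 2 / 2) := by
  have hquad := quadratic_le_exp_of_nonneg (by positivity : 0 ≤ x + x ^ 2)
  have h : exp (-(x + x ^ 2)) ≤ 1 - x := by
    rw [exp_neg, inv_le_comm₀ (exp_pos _) (by linarith)]
    refine le_trans ?_ hquad
    rw [inv_le_iff_one_le_mul₀ (by linarith)]
    nlinarith [sq_nonneg x, sq_nonneg (x * x)]
  calc (√(1 - x))⁻¹ ≤ (√(exp (-(x + x ^ 2))))⁻¹ := by gcongr
    _ = exp (x / 2 + x ^ 2 / 2) := by rw [← exp_half, ← exp_neg]; ring_nf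

lemma integrable_and_integral_le_of_lintegral_ofReal_le {α : Type*} [MeasurableSpace α]
    {μ : Measure α} {f : α → ℝ} (hf : AEStronglyMeasurable f μ) (hf₀ : 0 ≤ᵐ[μ] f) {c : ℝ}
    (hc : 0 ≤ c) (h : ∫⁻ x, ENNReal.ofReal (f x) ∂μ ≤ ENNReal.ofReal c) :
    Integrable f μ ∧ ∫ x, f x ∂μ ≤ c := by
  refine ⟨⟨hf, (hasFiniteIntegral_iff_ofReal hf₀).2 (h.trans_lt ENNReal.ofReal_lt_top)⟩, ?_⟩
  rw [integral_eq_lintegral_of_nonneg_ae hf₀ hf]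
  exact ENNReal.toReal_le_of_le_ofReal hc h

section StdGaussian

variable {E : Type*} [NormedAddCommGroup E] [InnerProductSpace ℝ E]

lemma inner_orthonormalBasis_sum_smul {ι : Type*} [Fintype ι] (b : OrthonormalBasis ι ℝ E)
    (x : ι → ℝ) (i : ι) : ⟪b i, ∑ j, x j • b j⟫ = x i := by
  classical
  simp [inner_sum, inner_smul_right, b.inner_eq_ite]

lemma lintegral_exp_inner_smul_le {Ω : Type*} [MeasurableSpace Ω] {P : Measure Ω} {X : Ω → E}
    {T : E →L[ℝ] E}
    (hX : ∀ z, Integrable (fun ω ↦ exp ⟪z, X ω⟫) P ∧ ∫ ω, exp ⟪z, X ω⟫ ∂P ≤ exp (⟪T z, z⟫ / 2))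
    (s : ℝ) (z : E) :
    ∫⁻ ω, ENNReal.ofReal (exp ⟪z, s • X ω⟫) ∂P ≤
      ENNReal.ofReal (exp (s ^ 2 / 2 * ⟪T z, z⟫)) := by
  obtain ⟨hint, hle⟩ := hX (s • z)
  simp only [map_smul, real_inner_smul_left, real_inner_smul_right] at hint hle ⊢
  rw [← ofReal_integral_eq_lintegral_ofReal hint (ae_of_all _ fun _ ↦ (exp_pos _).le)]
  exact ENNReal.ofReal_le_ofReal (hle.trans_eq (by ring_nf))

variable [FiniteDimensional ℝ E] [MeasurableSpace E] [BorelSpace E]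

lemma stdGaussian_map_innerSL (y : E) :
    (stdGaussian E).map (innerSL ℝ y) = gaussianReal 0 (‖y‖₊ ^ 2) := by
  rw [IsGaussian.map_eq_gaussianReal, integral_strongDual_stdGaussian, variance_dual_stdGaussian,
    innerSL_apply_norm]
  congr
  ext; simp

lemma integrable_exp_inner_stdGaussian (y : E) :
    Integrable (fun z ↦ exp ⟪z, y⟫) (stdGaussian E) := by
  have := integrable_exp_mul_gaussianReal (μ := 0) (v := ‖y‖₊ ^ 2) 1
  rw [← stdGaussian_map_innerSL, integrable_map_measure (by fun_prop) (by fun_prop)] at this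
  simpa [Function.comp_def, real_inner_comm] using this

lemma integral_exp_inner_stdGaussian (y : E) :
    ∫ z, exp ⟪z, y⟫ ∂stdGaussian E = exp (‖y‖ ^ 2 / 2) := by
  have := mgf_gaussianReal (stdGaussian_map_innerSL y) 1
  simpa [mgf, real_inner_comm] using this

lemma lintegral_exp_inner_stdGaussian (y : E) :
    ∫⁻ z, ENNReal.ofReal (exp ⟪z, y⟫) ∂stdGaussian E =
      ENNReal.ofReal (exp (‖y‖ ^ 2 / 2)) := by
  rw [← integral_exp_inner_stdGaussian,
    ofReal_integral_eq_lintegral_ofReal (integrable_exp_inner_stdGaussian y)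
      (ae_of_all _ fun _ ↦ (exp_pos _).le)]

lemma lintegral_exp_sq_norm_div_two_le {Ω : Type*} [MeasurableSpace Ω] {P : Measure Ω}
    [SFinite P] {X : Ω → E} (hX : AEMeasurable X P) {B : E → ℝ≥0∞}
    (hB : ∀ z, ∫⁻ ω, ENNReal.ofReal (exp ⟪z, X ω⟫) ∂P ≤ B z) :
    ∫⁻ ω, ENNReal.ofReal (exp (‖X ω‖ ^ 2 / 2)) ∂P ≤ ∫⁻ z, B z ∂stdGaussian E := by
  have hmeas : AEMeasurable (Function.uncurry fun ω z ↦ ENNReal.ofReal (exp ⟪z, X ω⟫))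
      (P.prod (stdGaussian E)) := by
    have hX₁ :=
      hX.comp_quasiMeasurePreserving (Measure.quasiMeasurePreserving_fst (ν := stdGaussian E))
    exact (measurable_snd.aemeasurable.inner hX₁).exp.ennreal_ofReal
  calc ∫⁻ ω, ENNReal.ofReal (exp (‖X ω‖ ^ 2 / 2)) ∂P
      = ∫⁻ ω, ∫⁻ z, ENNReal.ofReal (exp ⟪z, X ω⟫) ∂stdGaussian E ∂P := by
        simp_rw [lintegral_exp_inner_stdGaussian]
    _ = ∫⁻ z, ∫⁻ ω, ENNReal.ofReal (exp ⟪z, X ω⟫) ∂P ∂stdGaussian E :=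
        lintegral_lintegral_swap hmeas
    _ ≤ ∫⁻ z, B z ∂stdGaussian E := lintegral_mono hB

lemma integrable_exp_sum_mul_inner_sq_stdGaussian {ι : Type*} [Fintype ι]
    (b : OrthonormalBasis ι ℝ E) {v : ι → ℝ} (hv : ∀ i, v i < 1 / 2) :
    Integrable (fun z ↦ exp (∑ i, v i * ⟪b i, z⟫ ^ 2)) (stdGaussian E) := by
  rw [stdGaussian_eq_map_pi_orthonormalBasis b,
    integrable_map_measure (by fun_prop) (Measurable.aemeasurable (by fun_prop))]
  simp only [Function.comp_def, inner_orthonormalBasis_sum_smul, exp_sum]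
  exact Integrable.fintype_prod (f := fun i x ↦ exp (v i * x ^ 2))
    fun i ↦ integrable_exp_mul_sq_gaussianReal (hv i)

lemma integral_exp_sum_mul_inner_sq_stdGaussian {ι : Type*} [Fintype ι]
    (b : OrthonormalBasis ι ℝ E) {v : ι → ℝ} (hv : ∀ i, v i < 1 / 2) :
    ∫ z, exp (∑ i, v i * ⟪b i, z⟫ ^ 2) ∂stdGaussian E = ∏ i, (√(1 - 2 * v i))⁻¹ := by
  rw [stdGaussian_eq_map_pi_orthonormalBasis b,
    integral_map (Measurable.aemeasurable (by fun_prop)) (by fun_prop)]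
  simp only [inner_orthonormalBasis_sum_smul, exp_sum]
  rw [integral_fintype_prod_eq_prod (f := fun i x ↦ exp (v i * x ^ 2))]
  exact Finset.prod_congr rfl fun i _ ↦ integral_exp_mul_sq_gaussianReal (hv i)

end StdGaussian

namespace Matrix.IsHermitian

variable {n : Type*} [Fintype n] [DecidableEq n] {A : Matrix n n ℝ}

lemma toEuclideanCLM_eigenvectorBasis (hA : A.IsHermitian) (i : n) :
    toEuclideanCLM (𝕜 := ℝ) A (hA.eigenvectorBasis i) = hA.eigenvalues i • hA.eigenvectorBasis i :=
  WithLp.ofLp_injective 2 (by simpa [ofLp_toEuclideanCLM] using hA.mulVec_eigenvectorBasis i)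

lemma inner_toEuclideanCLM_self (hA : A.IsHermitian) (z : EuclideanSpace ℝ n) :
    ⟪toEuclideanCLM (𝕜 := ℝ) A z, z⟫ =
      ∑ i, hA.eigenvalues i * ⟪hA.eigenvectorBasis i, z⟫ ^ 2 := by
  have hz : toEuclideanCLM (𝕜 := ℝ) A z =
      ∑ i, (hA.eigenvalues i * ⟪hA.eigenvectorBasis i, z⟫) • hA.eigenvectorBasis i := by
    conv_lhs => rw [← hA.eigenvectorBasis.sum_repr' z]
    simp [toEuclideanCLM_eigenvectorBasis, smul_smul, mul_comm]
  simp [hz, sum_inner, real_inner_smul_left, sq, mul_assoc]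

lemma abs_eigenvalues_le_norm_toEuclideanCLM (hA : A.IsHermitian) (i : n) :
    |hA.eigenvalues i| ≤ ‖toEuclideanCLM (𝕜 := ℝ) A‖ := by
  have hb : ‖hA.eigenvectorBasis i‖ = 1 := hA.eigenvectorBasis.orthonormal.1 i
  simpa [toEuclideanCLM_eigenvectorBasis, norm_smul, hb] using
    (toEuclideanCLM (𝕜 := ℝ) A).le_opNorm (hA.eigenvectorBasis i)

lemma trace_mul_self_eq_sum_eigenvalues_sq (hA : A.IsHermitian) :
    (A * A).trace = ∑ i, hA.eigenvalues i ^ 2 := by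
  conv_lhs => rw [hA.spectral_theorem, ← map_mul, Unitary.conjStarAlgAut_apply, trace_mul_cycle,
    Unitary.coe_star_mul_self, one_mul, diagonal_mul_diagonal, trace_diagonal]
  simp [sq]

lemma sum_sq_apply_eq_sum_eigenvalues_sq (hA : A.IsHermitian) :
    ∑ i, ∑ j, A i j ^ 2 = ∑ i, hA.eigenvalues i ^ 2 := by
  rw [← hA.trace_mul_self_eq_sum_eigenvalues_sq, trace]
  refine Finset.sum_congr rfl fun i _ ↦ ?_
  simp only [diag_apply, mul_apply, sq]
  exact Finset.sum_congr rfl fun j _ ↦ by rw [← hA.apply j i, star_trivial]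

end Matrix.IsHermitian

lemma Matrix.PosSemidef.lintegral_exp_inner_toEuclideanCLM_le {n : Type*} [Fintype n]
    [DecidableEq n] {A : Matrix n n ℝ} (hA : A.PosSemidef) {t : ℝ} (ht₀ : 0 ≤ t)
    (ht : t * (2 * ‖Matrix.toEuclideanCLM (𝕜 := ℝ) A‖) < 1) :
    ∫⁻ z, ENNReal.ofReal (exp (t / 2 * ⟪Matrix.toEuclideanCLM (𝕜 := ℝ) A z, z⟫))
        ∂stdGaussian (EuclideanSpace ℝ n) ≤
      ENNReal.ofReal (exp (t / 2 * A.trace + t ^ 2 / 2 * ∑ i, ∑ j, A i j ^ 2)) := by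
  have heig : ∀ i, 0 ≤ t * hA.1.eigenvalues i ∧ t * hA.1.eigenvalues i ≤ 1 / 2 := fun i ↦
    ⟨mul_nonneg ht₀ (hA.eigenvalues_nonneg i), by
      nlinarith [le_abs_self (hA.1.eigenvalues i), hA.1.abs_eigenvalues_le_norm_toEuclideanCLM i]⟩
  have hv : ∀ i, t / 2 * hA.1.eigenvalues i < 1 / 2 := fun i ↦ by linarith [heig i]
  have hquad : ∀ z, t / 2 * ⟪Matrix.toEuclideanCLM (𝕜 := ℝ) A z, z⟫ =
      ∑ i, t / 2 * hA.1.eigenvalues i * ⟪hA.1.eigenvectorBasis i, z⟫ ^ 2 := fun z ↦ by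
    rw [hA.1.inner_toEuclideanCLM_self, Finset.mul_sum]
    simp_rw [mul_assoc]
  simp_rw [hquad]
  rw [← ofReal_integral_eq_lintegral_ofReal (integrable_exp_sum_mul_inner_sq_stdGaussian _ hv)
    (ae_of_all _ fun _ ↦ (exp_pos _).le), integral_exp_sum_mul_inner_sq_stdGaussian _ hv]
  refine ENNReal.ofReal_le_ofReal ?_
  calc ∏ i, (√(1 - 2 * (t / 2 * hA.1.eigenvalues i)))⁻¹
      ≤ ∏ i, exp (t * hA.1.eigenvalues i / 2 + (t * hA.1.eigenvalues i) ^ 2 / 2) := by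
        gcongr with i
        rw [show 1 - 2 * (t / 2 * hA.1.eigenvalues i) = 1 - t * hA.1.eigenvalues i by ring]
        exact inv_sqrt_one_sub_le_exp (heig i).1 (heig i).2
    _ = exp (∑ i, (t / 2 * hA.1.eigenvalues i + t ^ 2 / 2 * hA.1.eigenvalues i ^ 2)) := by
        rw [← exp_sum]
        ring_nf
    _ = exp (t / 2 * A.trace + t ^ 2 / 2 * ∑ i, ∑ j, A i j ^ 2) := by
        rw [Finset.sum_add_distrib, ← Finset.mul_sum, ← Finset.mul_sum,
          hA.1.trace_eq_sum_eigenvalues, hA.1.sum_sq_apply_eq_sum_eigenvalues_sq]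
        simp only [RCLike.ofReal_real_eq_id, id_eq]

theorem stmt_3_general {n : ℕ}
    (Γ : Matrix (Fin n) (Fin n) ℝ) (hΓ : Γ.PosSemidef)
    {Ω : Type*} [MeasurableSpace Ω] {P : Measure Ω} [IsProbabilityMeasure P]
    (X : Ω → EuclideanSpace ℝ (Fin n)) (hXmeas : AEMeasurable X P)
    (hX : ∀ z : EuclideanSpace ℝ (Fin n),
      Integrable (fun ω => Real.exp ⟪z, X ω⟫) P ∧
      ∫ ω, Real.exp ⟪z, X ω⟫ ∂P ≤ Real.exp (⟪(Matrix.toEuclideanCLM (𝕜 := ℝ) Γ) z, z⟫ / 2))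
    (t : ℝ) (ht0 : 0 ≤ t) (ht : t * (2 * ‖Matrix.toEuclideanCLM (𝕜 := ℝ) Γ‖) < 1) :
    Integrable (fun ω => Real.exp (t / 2 * (‖X ω‖ ^ 2 - Γ.trace))) P ∧
    ∫ ω, Real.exp (t / 2 * (‖X ω‖ ^ 2 - Γ.trace)) ∂P ≤
      Real.exp (t ^ 2 / 2 * (∑ i, ∑ j, (Γ i j) ^ 2)) := by
  have hdecouple : ∫⁻ ω, ENNReal.ofReal (exp (‖√t • X ω‖ ^ 2 / 2)) ∂P ≤
      ENNReal.ofReal (exp (t / 2 * Γ.trace + t ^ 2 / 2 * ∑ i, ∑ j, Γ i j ^ 2)) := by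
    refine (lintegral_exp_sq_norm_div_two_le (hXmeas.const_smul √t)
      (lintegral_exp_inner_smul_le hX √t)).trans ?_
    simpa only [sq_sqrt ht0] using hΓ.lintegral_exp_inner_toEuclideanCLM_le ht0 ht
  refine integrable_and_integral_le_of_lintegral_ofReal_le (by fun_prop)
    (ae_of_all _ fun _ ↦ (exp_pos _).le) (exp_pos _).le ?_
  calc ∫⁻ ω, ENNReal.ofReal (exp (t / 2 * (‖X ω‖ ^ 2 - Γ.trace))) ∂P
      = ENNReal.ofReal (exp (-(t / 2 * Γ.trace))) *
          ∫⁻ ω, ENNReal.ofReal (exp (‖√t • X ω‖ ^ 2 / 2)) ∂P := by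
        rw [← lintegral_const_mul' _ _ ENNReal.ofReal_ne_top]
        refine lintegral_congr fun ω ↦ ?_
        rw [← ENNReal.ofReal_mul (exp_pos _).le, ← exp_add, norm_smul, mul_pow, norm_eq_abs,
          sq_abs, sq_sqrt ht0]
        ring_nf
    _ ≤ ENNReal.ofReal (exp (-(t / 2 * Γ.trace))) *
          ENNReal.ofReal (exp (t / 2 * Γ.trace + t ^ 2 / 2 * ∑ i, ∑ j, Γ i j ^ 2)) := by
        gcongr
    _ = ENNReal.ofReal (exp (t ^ 2 / 2 * ∑ i, ∑ j, Γ i j ^ 2)) := by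
        rw [← ENNReal.ofReal_mul (exp_pos _).le, ← exp_add]
        ring_nf

/-- Let `X` be a mean-zero random vector in `ℝⁿ` with `E[exp(zᵀX)] ≤ exp(zᵀΓz/2)` for all `z`,
`Γ` positive semidefinite. Then for all `0 ≤ t < (2‖Γ‖_op)⁻¹`,
`E[exp((t/2)(‖X‖² − tr Γ))] ≤ exp((t²/2)‖Γ‖²_HS)`. -/
theorem stmt_3 {n : ℕ}
    (Γ : Matrix (Fin n) (Fin n) ℝ) (hΓ : Γ.PosSemidef)
    {Ω : Type*} [MeasurableSpace Ω] {P : Measure Ω} [IsProbabilityMeasure P]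
    (X : Ω → EuclideanSpace ℝ (Fin n)) (hXmeas : AEMeasurable X P)
    (hXint : Integrable X P) (hXmean : ∫ ω, X ω ∂P = 0)
    (hX : ∀ z : EuclideanSpace ℝ (Fin n),
      Integrable (fun ω => Real.exp ⟪z, X ω⟫) P ∧
      ∫ ω, Real.exp ⟪z, X ω⟫ ∂P ≤ Real.exp (⟪(Matrix.toEuclideanCLM (𝕜 := ℝ) Γ) z, z⟫ / 2))
    (t : ℝ) (ht0 : 0 ≤ t) (ht : t * (2 * ‖Matrix.toEuclideanCLM (𝕜 := ℝ) Γ‖) < 1) :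
    Integrable (fun ω => Real.exp (t / 2 * (‖X ω‖ ^ 2 - Γ.trace))) P ∧
    ∫ ω, Real.exp (t / 2 * (‖X ω‖ ^ 2 - Γ.trace)) ∂P ≤
      Real.exp (t ^ 2 / 2 * (∑ i, ∑ j, (Γ i j) ^ 2)) :=
  stmt_3_general Γ hΓ X hXmeas hX t ht0 ht
end

section
/- Let Z* be the membership matrix of a partition of {1,…,n} with minimum cluster size n̲, and let Z ∈ 𝒞 = {Zᵀ = Z, Z ⪰ 0, tr(Z) = K, Z𝟙ₙ = 𝟙ₙ, Z ≥ 0}. Then |Z* − Z*Z|₁ ≤ |Z* − Z|₁ ≤ (2n/n̲)·|Z* − Z*Z|₁. -/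
/-!
Write `s_k(j) = ∑_{l ∈ G_k} Z_{lj}` for the mass that column `j` of `Z` puts on cluster `k`.
Both distances are computed exactly: `|Z* - Z*Z|₁ = 2·OUT` and `|Z* - Z|₁ = 2·OUT + 2·EXC`, where
`OUT = ∑_j (1 - s_{c(j)}(j))` is the off-cluster mass and `EXC ≥ 0` the total excess of the
in-cluster entries over `1/n_k`; this is the first inequality.

For the second, positive semidefiniteness gives `2 Z_ij ≤ Z_ii + Z_jj`, so `EXC` is at most
`∑_k n_k` times the excess of the diagonal over `1/n_k` on `G_k`. Since `tr Z = K`, the diagonal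
excess equals the diagonal deficit, and Cauchy–Schwarz `s_k(i)² ≤ n_k Z_ii` bounds `n_k` times
the deficit at `i` by `2(1 - s_k(i))`. Hence `n̲·EXC ≤ 2(n - n̲)·OUT`, as `n_k ≤ n - n̲` when
`K ≥ 2` (when `K = 1`, `OUT = 0` and the same argument with `n` in place of `n - n̲` applies).
-/

open Finset Matrix

lemma sum_abs_ite_sub_eq {κ : Type*} [Fintype κ] [DecidableEq κ] (p : κ → ℝ)
    (hp : ∀ k, 0 ≤ p k) (hsum : ∑ k, p k = 1) (k₀ : κ) :
    ∑ k, |(if k = k₀ then 1 else 0) - p k| = 2 * (1 - p k₀) := by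
  have hle : p k₀ ≤ 1 := hsum ▸ single_le_sum (fun k _ => hp k) (mem_univ k₀)
  have hrest : ∑ k ∈ univ.erase k₀, p k = 1 - p k₀ := by
    rw [← hsum, ← add_sum_erase _ _ (mem_univ k₀), add_sub_cancel_left]
  have hoff : ∀ k ∈ univ.erase k₀, |(if k = k₀ then 1 else 0) - p k| = p k := fun k hk => by
    rw [if_neg (ne_of_mem_erase hk), zero_sub, abs_neg, abs_of_nonneg (hp k)]
  rw [← add_sum_erase _ _ (mem_univ k₀), if_pos rfl, abs_of_nonneg (sub_nonneg.2 hle),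
    sum_congr rfl hoff, hrest]
  ring

lemma sum_sum_max_zero_le_card_mul {ι : Type*} (S : Finset ι) (a : ι → ι → ℝ) (f : ι → ℝ)
    (h : ∀ i ∈ S, ∀ j ∈ S, 2 * a i j ≤ f i + f j) :
    ∑ j ∈ S, ∑ i ∈ S, max (a i j) 0 ≤ #S * ∑ i ∈ S, max (f i) 0 := by
  have hpair (i) (hi : i ∈ S) (j) (hj : j ∈ S) :
      max (a i j) 0 ≤ (max (f i) 0 + max (f j) 0) / 2 := by
    have := h i hi j hj
    exact max_le (by linarith [le_max_left (f i) 0, le_max_left (f j) 0]) (by positivity)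
  calc ∑ j ∈ S, ∑ i ∈ S, max (a i j) 0
      ≤ ∑ j ∈ S, ∑ i ∈ S, (max (f i) 0 + max (f j) 0) / 2 :=
        sum_le_sum fun j hj => sum_le_sum fun i hi => hpair i hi j hj
    _ = #S * ∑ i ∈ S, max (f i) 0 := by
        simp only [add_div, sum_add_distrib, ← sum_div, sum_const, nsmul_eq_mul, ← mul_sum]
        ring

namespace Matrix.PosSemidef

variable {ι : Type*} {Z : Matrix ι ι ℝ}

lemma transpose_eq_self (hZ : Z.PosSemidef) : Zᵀ = Z := by
  rw [← conjTranspose_eq_transpose_of_trivial]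
  exact hZ.isHermitian

variable [Fintype ι]

lemma dotProduct_mulVec_comm (hZ : Z.PosSemidef) (x y : ι → ℝ) :
    y ⬝ᵥ Z *ᵥ x = x ⬝ᵥ Z *ᵥ y := by
  rw [dotProduct_mulVec, ← mulVec_transpose, hZ.transpose_eq_self, dotProduct_comm]

variable [DecidableEq ι]

lemma dotProduct_mulVec_sq_le (hZ : Z.PosSemidef) (x y : ι → ℝ) :
    (x ⬝ᵥ Z *ᵥ y) ^ 2 ≤ (x ⬝ᵥ Z *ᵥ x) * (y ⬝ᵥ Z *ᵥ y) := by
  have h := LinearMap.BilinForm.apply_mul_apply_le_of_forall_zero_le (toBilin' Z)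
    (fun v => by simpa [toBilin'_apply'] using hZ.dotProduct_mulVec_nonneg v) x y
  simpa only [toBilin'_apply', hZ.dotProduct_mulVec_comm x y, ← sq] using h

lemma two_mul_apply_le_add_diag (hZ : Z.PosSemidef) (i j : ι) :
    2 * Z i j ≤ Z i i + Z j j := by
  have h := hZ.dotProduct_mulVec_nonneg (Pi.single i 1 - Pi.single j 1)
  have hji : Z j i = Z i j := hZ.isHermitian.apply i j
  simp only [star_trivial, mulVec_sub, dotProduct_sub, sub_dotProduct, mulVec_single_one,
    single_one_dotProduct, col_apply] at h
  linarith

end Matrix.PosSemidef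

lemma mem_doublyStochastic_of_posSemidef {ι : Type*} [Fintype ι] [DecidableEq ι]
    {Z : Matrix ι ι ℝ} (hpsd : Z.PosSemidef) (hnonneg : ∀ i j, 0 ≤ Z i j)
    (hrow : Z *ᵥ 1 = 1) : Z ∈ doublyStochastic ℝ ι := by
  refine mem_doublyStochastic.2 ⟨hnonneg, hrow, ?_⟩
  rw [← mulVec_transpose, hpsd.transpose_eq_self, hrow]

section Clustering

variable {ι κ : Type*} [Fintype ι] [DecidableEq κ]

def cluster (c : ι → κ) (k : κ) : Finset ι := {i | c i = k}

noncomputable def membershipMatrix (c : ι → κ) : Matrix ι ι ℝ :=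
  of fun i j => if c i = c j then 1 / (#(cluster c (c i)) : ℝ) else 0

def clusterMass (c : ι → κ) (Z : Matrix ι ι ℝ) (k : κ) (j : ι) : ℝ :=
  ∑ l ∈ cluster c k, Z l j

def offClusterMass (c : ι → κ) (Z : Matrix ι ι ℝ) : ℝ :=
  ∑ j, (1 - clusterMass c Z (c j) j)

noncomputable def inClusterExcess (c : ι → κ) (Z : Matrix ι ι ℝ) : ℝ :=
  ∑ j, ∑ i ∈ cluster c (c j), max (Z i j - 1 / #(cluster c (c j))) 0

variable {c : ι → κ} {Z : Matrix ι ι ℝ}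

@[simp]
lemma mem_cluster {k : κ} {i : ι} : i ∈ cluster c k ↔ c i = k := by simp [cluster]

lemma card_cluster_pos (hc : Function.Surjective c) (k : κ) : 0 < #(cluster c k) := by
  obtain ⟨i, rfl⟩ := hc k
  exact card_pos.2 ⟨i, mem_cluster.2 rfl⟩

lemma card_cluster_add_card_cluster_le [DecidableEq ι] {k k' : κ} (hk : k ≠ k') :
    #(cluster c k) + #(cluster c k') ≤ Fintype.card ι := by
  rw [← card_union_of_disjoint (disjoint_left.2 fun i hi hi' =>
    hk ((mem_cluster.1 hi).symm.trans (mem_cluster.1 hi')))]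
  exact card_le_univ _

lemma membershipMatrix_mul_apply (i j : ι) :
    (membershipMatrix c * Z) i j = clusterMass c Z (c i) j / #(cluster c (c i)) := by
  simp only [mul_apply, membershipMatrix, of_apply, ite_mul, zero_mul, one_div_mul_eq_div,
    ← sum_filter, clusterMass, sum_div]
  congr 1
  ext
  simp [eq_comm]

lemma vecMul_clusterIndicator (k : κ) :
    (fun l => if c l = k then 1 else 0) ᵥ* Z = clusterMass c Z k := by
  ext j
  simp [vecMul, dotProduct, ite_mul, ← sum_filter, clusterMass, cluster]

lemma inClusterExcess_nonneg : 0 ≤ inClusterExcess c Z :=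
  sum_nonneg fun _ _ => sum_nonneg fun _ _ => le_max_right _ _

section DoublyStochastic

variable [DecidableEq ι] (hZ : Z ∈ doublyStochastic ℝ ι)
include hZ

lemma clusterMass_nonneg (k : κ) (j : ι) : 0 ≤ clusterMass c Z k j :=
  sum_nonneg fun _ _ => nonneg_of_mem_doublyStochastic hZ

lemma sum_compl_cluster (k : κ) (j : ι) :
    ∑ i ∈ (cluster c k)ᶜ, Z i j = 1 - clusterMass c Z k j := by
  rw [← sum_col_of_mem_doublyStochastic hZ j, ← sum_add_sum_compl (cluster c k), clusterMass]
  ring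

lemma sum_abs_membershipMatrix_sub_apply (j : ι) :
    ∑ i, |(membershipMatrix c - Z) i j|
      = 2 * (1 - clusterMass c Z (c j) j)
        + 2 * ∑ i ∈ cluster c (c j), max (Z i j - 1 / #(cluster c (c j))) 0 := by
  set m : ℝ := (#(cluster c (c j)) : ℝ)
  have hm : m ≠ 0 := Nat.cast_ne_zero.2 (card_pos.2 ⟨j, mem_cluster.2 rfl⟩).ne'
  have hin : ∀ i ∈ cluster c (c j), |(membershipMatrix c - Z) i j|
      = (1 / m - Z i j) + 2 * max (Z i j - 1 / m) 0 := by
    intro i hi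
    have habs := max_zero_add_max_neg_zero_eq_abs_self (1 / m - Z i j)
    have hself := max_zero_sub_max_neg_zero_eq_self (1 / m - Z i j)
    rw [neg_sub] at habs hself
    rw [Matrix.sub_apply, membershipMatrix, of_apply, if_pos (mem_cluster.1 hi),
      mem_cluster.1 hi]
    linarith
  have hout : ∀ i ∈ (cluster c (c j))ᶜ, |(membershipMatrix c - Z) i j| = Z i j := by
    intro i hi
    rw [Matrix.sub_apply, membershipMatrix, of_apply, if_neg (by simpa using hi), zero_sub,
      abs_neg, abs_of_nonneg (nonneg_of_mem_doublyStochastic hZ)]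
  rw [← sum_add_sum_compl (cluster c (c j)), sum_congr rfl hin, sum_congr rfl hout,
    sum_compl_cluster hZ, sum_add_distrib, sum_sub_distrib, sum_const, nsmul_eq_mul,
    mul_one_div_cancel hm, ← mul_sum, ← clusterMass]
  ring

lemma sum_abs_membershipMatrix_sub :
    ∑ i, ∑ j, |(membershipMatrix c - Z) i j|
      = 2 * offClusterMass c Z + 2 * inClusterExcess c Z := by
  rw [sum_comm, offClusterMass, inClusterExcess, mul_sum, mul_sum, ← sum_add_distrib]
  exact sum_congr rfl fun j _ => sum_abs_membershipMatrix_sub_apply hZ j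

end DoublyStochastic

variable [Fintype κ]

lemma sum_eq_sum_sum_cluster {M : Type*} [AddCommMonoid M] (c : ι → κ) (f : ι → M) :
    ∑ i, f i = ∑ k, ∑ i ∈ cluster c k, f i :=
  (sum_fiberwise univ c f).symm

lemma sum_comp_div_card_cluster (hc : Function.Surjective c) (g : κ → ℝ) :
    ∑ i, g (c i) / #(cluster c (c i)) = ∑ k, g k := by
  rw [sum_eq_sum_sum_cluster c]
  refine sum_congr rfl fun k _ => ?_
  rw [sum_congr rfl fun i hi => by rw [mem_cluster.1 hi], sum_const, nsmul_eq_mul]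
  have := (card_cluster_pos hc k).ne'
  field_simp

lemma offClusterMass_eq_sum_cluster :
    offClusterMass c Z = ∑ k, ∑ i ∈ cluster c k, (1 - clusterMass c Z k i) := by
  rw [offClusterMass, sum_eq_sum_sum_cluster c]
  exact sum_congr rfl fun k _ => sum_congr rfl fun i hi => by rw [mem_cluster.1 hi]

lemma sum_sum_max_diag_sub_eq (hc : Function.Surjective c) (htr : Z.trace = Fintype.card κ) :
    ∑ k, ∑ i ∈ cluster c k, max (Z i i - 1 / #(cluster c k)) 0
      = ∑ k, ∑ i ∈ cluster c k, max (1 / #(cluster c k) - Z i i) 0 := by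
  have hcluster (k : κ) :
      ∑ i ∈ cluster c k, (Z i i - 1 / #(cluster c k)) = ∑ i ∈ cluster c k, Z i i - 1 := by
    rw [sum_sub_distrib, sum_const, nsmul_eq_mul,
      mul_one_div_cancel (Nat.cast_ne_zero.2 (card_cluster_pos hc k).ne')]
  rw [← sub_eq_zero, ← sum_sub_distrib]
  simp_rw [← sum_sub_distrib, ← neg_sub (Z _ _), max_zero_sub_max_neg_zero_eq_self, hcluster,
    sum_sub_distrib, ← sum_eq_sum_sum_cluster c fun i => Z i i]
  rw [sum_const, card_univ, nsmul_one, ← htr, sub_eq_zero]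
  rfl

variable [DecidableEq ι]

lemma inClusterExcess_le (hpsd : Z.PosSemidef) :
    inClusterExcess c Z
      ≤ ∑ k, #(cluster c k) * ∑ i ∈ cluster c k, max (Z i i - 1 / #(cluster c k)) 0 := by
  rw [inClusterExcess, sum_eq_sum_sum_cluster c]
  refine sum_le_sum fun k _ => ?_
  rw [sum_congr rfl fun j hj => by rw [mem_cluster.1 hj]]
  refine sum_sum_max_zero_le_card_mul _ _ _ fun i _ j _ => ?_
  linarith [hpsd.two_mul_apply_le_add_diag i j]

section DoublyStochastic

variable (hZ : Z ∈ doublyStochastic ℝ ι)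
include hZ

lemma sum_clusterMass (j : ι) : ∑ k, clusterMass c Z k j = 1 := by
  rw [← sum_col_of_mem_doublyStochastic hZ j, sum_eq_sum_sum_cluster c]
  rfl

lemma clusterMass_le_one (k : κ) (j : ι) : clusterMass c Z k j ≤ 1 :=
  sum_clusterMass (c := c) hZ j ▸
    single_le_sum (fun k _ => clusterMass_nonneg hZ k j) (mem_univ k)

lemma offClusterMass_nonneg : 0 ≤ offClusterMass c Z :=
  sum_nonneg fun j _ => sub_nonneg.2 (clusterMass_le_one hZ _ j)

lemma offClusterMass_eq_zero_of_card_le_one (hκ : Fintype.card κ ≤ 1) :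
    offClusterMass c Z = 0 := by
  have := Fintype.card_le_one_iff_subsingleton.1 hκ
  refine sum_eq_zero fun j _ => ?_
  rw [clusterMass, sub_eq_zero, ← sum_col_of_mem_doublyStochastic hZ j]
  congr 1
  ext i
  simpa using Subsingleton.elim _ _

lemma sum_abs_membershipMatrix_sub_mul (hc : Function.Surjective c) :
    ∑ i, ∑ j, |(membershipMatrix c - membershipMatrix c * Z) i j| = 2 * offClusterMass c Z := by
  have hentry (i j : ι) : |(membershipMatrix c - membershipMatrix c * Z) i j|
      = |(if c i = c j then 1 else 0) - clusterMass c Z (c i) j| / #(cluster c (c i)) := by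
    rw [← Nat.abs_cast, ← abs_div, sub_div, ite_div, zero_div, Matrix.sub_apply,
      membershipMatrix_mul_apply]
    rfl
  rw [sum_comm, offClusterMass, mul_sum]
  refine sum_congr rfl fun j _ => ?_
  rw [sum_congr rfl fun i _ => hentry i j,
    sum_comp_div_card_cluster hc fun k => |(if k = c j then 1 else 0) - clusterMass c Z k j|]
  exact sum_abs_ite_sub_eq _ (clusterMass_nonneg hZ · j) (sum_clusterMass hZ j) (c j)

variable (hpsd : Z.PosSemidef)
include hpsd

lemma clusterMass_sq_le (k : κ) (i : ι) :
    clusterMass c Z k i ^ 2 ≤ Z i i * #(cluster c k) := by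
  set x : ι → ℝ := fun l => if c l = k then 1 else 0
  have hcs := hpsd.dotProduct_mulVec_sq_le x (Pi.single i 1)
  have hxx : x ⬝ᵥ Z *ᵥ x ≤ #(cluster c k) := by
    rw [dotProduct_mulVec, vecMul_clusterIndicator, dotProduct_comm]
    simp only [dotProduct, x, ite_mul, one_mul, zero_mul, ← sum_filter]
    calc ∑ l with c l = k, clusterMass c Z k l ≤ ∑ l with c l = k, (1 : ℝ) :=
          sum_le_sum fun l _ => clusterMass_le_one hZ k l
      _ = #(cluster c k) := by simp [cluster]
  rw [dotProduct_mulVec x, vecMul_clusterIndicator, dotProduct_single_one,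
    single_one_dotProduct, mulVec_single_one, col_apply] at hcs
  calc clusterMass c Z k i ^ 2 ≤ (x ⬝ᵥ Z *ᵥ x) * Z i i := hcs
    _ ≤ #(cluster c k) * Z i i := by gcongr; exact hpsd.diag_nonneg
    _ = Z i i * #(cluster c k) := mul_comm _ _

variable (hc : Function.Surjective c)
include hc

lemma card_mul_max_inv_sub_diag_le (k : κ) (i : ι) :
    #(cluster c k) * max (1 / #(cluster c k) - Z i i) 0 ≤ 2 * (1 - clusterMass c Z k i) := by
  have hm : (0 : ℝ) < #(cluster c k) := Nat.cast_pos.2 (card_cluster_pos hc k)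
  have hs := clusterMass_le_one (c := c) hZ k i
  have hsq := clusterMass_sq_le (c := c) hZ hpsd k i
  rw [mul_max_of_nonneg _ _ hm.le, mul_sub, mul_one_div_cancel hm.ne', mul_zero]
  exact max_le (by nlinarith) (by linarith)

variable {nmin : ℕ} (hsize : ∀ k, nmin ≤ #(cluster c k))
include hsize

lemma mul_sum_sum_max_inv_sub_diag_le :
    nmin * ∑ k, ∑ i ∈ cluster c k, max (1 / #(cluster c k) - Z i i) 0
      ≤ 2 * offClusterMass c Z := by
  rw [offClusterMass_eq_sum_cluster, mul_sum, mul_sum]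
  refine sum_le_sum fun k _ => ?_
  calc (nmin : ℝ) * ∑ i ∈ cluster c k, max (1 / #(cluster c k) - Z i i) 0
      ≤ #(cluster c k) * ∑ i ∈ cluster c k, max (1 / #(cluster c k) - Z i i) 0 := by
        gcongr
        exact hsize k
    _ ≤ 2 * ∑ i ∈ cluster c k, (1 - clusterMass c Z k i) := by
        rw [mul_sum, mul_sum]
        exact sum_le_sum fun i _ => card_mul_max_inv_sub_diag_le hZ hpsd hc k i

variable (htr : Z.trace = Fintype.card κ)
include htr

lemma mul_inClusterExcess_le {M : ℕ} (hM : ∀ k, #(cluster c k) ≤ M) :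
    nmin * inClusterExcess c Z ≤ 2 * M * offClusterMass c Z := by
  have hexcess : inClusterExcess c Z
      ≤ M * ∑ k, ∑ i ∈ cluster c k, max (1 / #(cluster c k) - Z i i) 0 := by
    rw [← sum_sum_max_diag_sub_eq hc htr, mul_sum]
    refine (inClusterExcess_le hpsd).trans (sum_le_sum fun k _ => ?_)
    gcongr
    exact hM k
  have hdeficit := mul_sum_sum_max_inv_sub_diag_le hZ hpsd hc hsize
  calc (nmin : ℝ) * inClusterExcess c Z
      ≤ M * (nmin * ∑ k, ∑ i ∈ cluster c k, max (1 / #(cluster c k) - Z i i) 0) := by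
        nlinarith [(Nat.cast_nonneg nmin : (0 : ℝ) ≤ nmin)]
    _ ≤ 2 * M * offClusterMass c Z := by nlinarith [(Nat.cast_nonneg M : (0 : ℝ) ≤ M)]

lemma mul_offClusterMass_add_inClusterExcess_le :
    nmin * (offClusterMass c Z + inClusterExcess c Z)
      ≤ 2 * Fintype.card ι * offClusterMass c Z := by
  rcases le_or_gt (Fintype.card κ) 1 with hκ | hκ
  · have h := mul_inClusterExcess_le hZ hpsd hc hsize htr fun k => card_le_univ (cluster c k)
    rw [offClusterMass_eq_zero_of_card_le_one hZ hκ] at h ⊢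
    simpa using h
  · obtain ⟨k₀⟩ := Fintype.card_pos_iff.1 (zero_lt_one.trans hκ)
    have hn : nmin ≤ Fintype.card ι := (hsize k₀).trans (card_le_univ _)
    have hM (k : κ) : #(cluster c k) ≤ Fintype.card ι - nmin := by
      obtain ⟨k', hk'⟩ := Fintype.exists_ne_of_one_lt_card hκ k
      have := card_cluster_add_card_cluster_le (c := c) hk'.symm
      have := hsize k'
      omega
    have h := mul_inClusterExcess_le hZ hpsd hc hsize htr hM
    rw [Nat.cast_sub hn] at h
    nlinarith [offClusterMass_nonneg (c := c) hZ, (Nat.cast_nonneg nmin : (0 : ℝ) ≤ nmin)]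

end DoublyStochastic

end Clustering

theorem stmt_16_general {n K : ℕ} (c : Fin n → Fin K) (hc : Function.Surjective c)
    (nmin : ℕ) (hnmin : 0 < nmin)
    (hsize : ∀ k : Fin K, nmin ≤ (Finset.univ.filter fun l => c l = k).card)
    (Zstar : Matrix (Fin n) (Fin n) ℝ)
    (hZstar : ∀ i j, Zstar i j =
      if c i = c j then 1 / ((Finset.univ.filter fun l => c l = c i).card : ℝ) else 0)
    (Z : Matrix (Fin n) (Fin n) ℝ)
    (hpsd : Z.PosSemidef) (htr : Z.trace = (K : ℝ))
    (hrow : Z.mulVec (fun _ => (1 : ℝ)) = (fun _ => (1 : ℝ)))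
    (hnonneg : ∀ i j, 0 ≤ Z i j) :
    (∑ i, ∑ j, |(Zstar - Zstar * Z) i j|) ≤ (∑ i, ∑ j, |(Zstar - Z) i j|) ∧
    (∑ i, ∑ j, |(Zstar - Z) i j|) ≤
      (2 * n / nmin : ℝ) * ∑ i, ∑ j, |(Zstar - Zstar * Z) i j| := by
  obtain rfl : Zstar = membershipMatrix c := by ext i j; exact hZstar i j
  have hZ := mem_doublyStochastic_of_posSemidef hpsd hnonneg hrow
  have key := mul_offClusterMass_add_inClusterExcess_le hZ hpsd hc hsize
    (by rwa [Fintype.card_fin])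
  rw [Fintype.card_fin] at key
  rw [sum_abs_membershipMatrix_sub_mul hZ hc, sum_abs_membershipMatrix_sub hZ]
  refine ⟨by linarith [inClusterExcess_nonneg (c := c) (Z := Z)], ?_⟩
  rw [div_mul_eq_mul_div, le_div_iff₀ (by exact_mod_cast hnmin)]
  linarith

/-- For the membership matrix `Z*` of a partition of `{1,…,n}` with minimum cluster size at
least `nmin > 0`, and any `Z` in the K-means SDP feasible set,
`|Z* − Z*Z|₁ ≤ |Z* − Z|₁ ≤ (2n/nmin)|Z* − Z*Z|₁`. -/
theorem stmt_16 {n K : ℕ} (c : Fin n → Fin K) (hc : Function.Surjective c)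
    (nmin : ℕ) (hnmin : 0 < nmin)
    (hsize : ∀ k : Fin K, nmin ≤ (Finset.univ.filter fun l => c l = k).card)
    (Zstar : Matrix (Fin n) (Fin n) ℝ)
    (hZstar : ∀ i j, Zstar i j =
      if c i = c j then 1 / ((Finset.univ.filter fun l => c l = c i).card : ℝ) else 0)
    (Z : Matrix (Fin n) (Fin n) ℝ)
    (hsymm : Z.transpose = Z) (hpsd : Z.PosSemidef) (htr : Z.trace = (K : ℝ))
    (hrow : Z.mulVec (fun _ => (1 : ℝ)) = (fun _ => (1 : ℝ)))
    (hnonneg : ∀ i j, 0 ≤ Z i j) :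
    (∑ i, ∑ j, |(Zstar - Zstar * Z) i j|) ≤ (∑ i, ∑ j, |(Zstar - Z) i j|) ∧
    (∑ i, ∑ j, |(Zstar - Z) i j|) ≤
      (2 * n / nmin : ℝ) * ∑ i, ∑ j, |(Zstar - Zstar * Z) i j| :=
  stmt_16_general c hc nmin hnmin hsize Zstar hZstar Z hpsd htr hrow hnonneg
end
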